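/- arXiv:1712.00008 — 7 statements merged into one kernel-verified Lean document; each statement's English description precedes it below -/
import Mathlib

section
/- A finite simple graph G is a central-max-point tolerance graph (CMPTG) if and only if G is a unit-max-tolerance graph (UMTG). -/
variable {V : Type*}

/-- An MPT representation of a simple graph: each vertex `u` gets an interval
`[a u, b u]` with a point `p u` inside it, and distinct vertices `u, v` are adjacent
iff both `p u` and `p v` lie in the intersection of the two intervals. -/
def IsMPTRep (G : SimpleGraph V) (a b p : V → ℝ) : Prop :=
  (∀ u, a u ≤ b u) ∧ (∀ u, p u ∈ Set.Icc (a u) (b u)) ∧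
    ∀ u v : V, u ≠ v →
      (G.Adj u v ↔ p u ∈ Set.Icc (a u) (b u) ∩ Set.Icc (a v) (b v) ∧
                   p v ∈ Set.Icc (a u) (b u) ∩ Set.Icc (a v) (b v))

/-- A central-max-point tolerance graph: an MPT representation where every point is
the center of its interval. -/
def IsCMPTG (G : SimpleGraph V) : Prop :=
  ∃ a b : V → ℝ, IsMPTRep G a b (fun u => (a u + b u) / 2)

/-- A max-tolerance representation: each vertex `u` gets an interval `[a u, b u]` and a
positive tolerance `t u`, and distinct `u, v` are adjacent iff the length of
`[a u, b u] ∩ [a v, b v]` (zero if empty) is at least `max (t u) (t v)`. -/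
def IsMaxTolRep (G : SimpleGraph V) (a b t : V → ℝ) : Prop :=
  (∀ u, a u ≤ b u) ∧ (∀ u, 0 < t u) ∧
    ∀ u v : V, u ≠ v →
      (G.Adj u v ↔ max (t u) (t v) ≤ max (min (b u) (b v) - max (a u) (a v)) 0)

/-- A unit-max-tolerance graph: a max-tolerance representation in which all intervals
have the same length. -/
def IsUMTG (G : SimpleGraph V) : Prop :=
  ∃ a b t : V → ℝ, IsMaxTolRep G a b t ∧ ∀ u v : V, b u - a u = b v - a v

/-- disk representation predicate -/
def DiskRep (G : SimpleGraph V) (c r : V → ℝ) : Prop :=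
  ∀ u v : V, u ≠ v → (G.Adj u v ↔ |c u - c v| ≤ min (r u) (r v))

lemma centIff (cu cv ru rv : ℝ) (hru : 0 ≤ ru) (hrv : 0 ≤ rv) :
    (cu ∈ Set.Icc (cu - ru) (cu + ru) ∩ Set.Icc (cv - rv) (cv + rv) ∧
     cv ∈ Set.Icc (cu - ru) (cu + ru) ∩ Set.Icc (cv - rv) (cv + rv)) ↔
    |cu - cv| ≤ min ru rv := by
  simp only [Set.mem_inter_iff, Set.mem_Icc, le_min_iff, abs_sub_le_iff]
  constructor
  · rintro ⟨⟨⟨h1, h2⟩, ⟨h3, h4⟩⟩, ⟨⟨h5, h6⟩, _⟩⟩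
    exact ⟨⟨by linarith, by linarith⟩, ⟨by linarith, by linarith⟩⟩
  · rintro ⟨⟨h1, h2⟩, ⟨h3, h4⟩⟩
    exact ⟨⟨⟨by linarith, by linarith⟩, ⟨by linarith, by linarith⟩⟩,
           ⟨⟨by linarith, by linarith⟩, ⟨by linarith, by linarith⟩⟩⟩

lemma tolIff' (L m d : ℝ) (h : m < L) : L - m ≤ max (L - d) 0 ↔ d ≤ m := by
  constructor
  · intro hle
    rcases le_total (L - d) 0 with h0 | h0
    · rw [max_eq_right h0] at hle; linarith
    · rw [max_eq_left h0] at hle; linarith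
  · intro hd
    exact le_max_of_le_left (by linarith)

lemma normMin (cu cv L : ℝ) : min (cu + L) (cv + L) - max cu cv = L - |cu - cv| := by
  rcases le_total cu cv with h | h
  · rw [min_eq_left (by linarith), max_eq_right h, abs_of_nonpos (by linarith)]; ring
  · rw [min_eq_right (by linarith), max_eq_left h, abs_of_nonneg (by linarith)]; ring

lemma normMax (x y L : ℝ) : max (L - x) (L - y) = L - min x y := by
  rcases le_total x y with h | h
  · rw [min_eq_left h, max_eq_left (by linarith)]
  · rw [min_eq_right h, max_eq_right (by linarith)]

/-- CMPTG is exactly having a disk representation with nonnegative radii. -/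
lemma cmptg_iff_disk (G : SimpleGraph V) :
    IsCMPTG G ↔ ∃ c r : V → ℝ, (∀ u, 0 ≤ r u) ∧ DiskRep G c r := by
  constructor
  · rintro ⟨a, b, hab, _, hadj⟩
    refine ⟨fun u => (a u + b u) / 2, fun u => (b u - a u) / 2,
      fun u => by linarith [hab u], fun u v huv => ?_⟩
    rw [hadj u v huv]
    have h := centIff ((a u + b u) / 2) ((a v + b v) / 2) ((b u - a u) / 2)
      ((b v - a v) / 2) (by linarith [hab u]) (by linarith [hab v])
    have e1 : (a u + b u) / 2 - (b u - a u) / 2 = a u := by ring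
    have e2 : (a u + b u) / 2 + (b u - a u) / 2 = b u := by ring
    have e3 : (a v + b v) / 2 - (b v - a v) / 2 = a v := by ring
    have e4 : (a v + b v) / 2 + (b v - a v) / 2 = b v := by ring
    rw [e1, e2, e3, e4] at h
    exact h
  · rintro ⟨c, r, hr, hdisk⟩
    refine ⟨fun u => c u - r u, fun u => c u + r u,
      fun u => show c u - r u ≤ c u + r u by linarith [hr u],
      fun u => ?_, fun u v huv => ?_⟩
    · simp only [Set.mem_Icc]
      constructor <;> [linarith [hr u]; linarith [hr u]]
    · rw [hdisk u v huv]
      have ecu : (c u - r u + (c u + r u)) / 2 = c u := by ring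
      have ecv : (c v - r v + (c v + r v)) / 2 = c v := by ring
      simp only
      rw [ecu, ecv, centIff (c u) (c v) (r u) (r v) (hr u) (hr v)]

/-- UMTG is exactly having a disk representation with radii bounded above. -/
lemma umtg_iff_disk (G : SimpleGraph V) :
    IsUMTG G ↔ ∃ (c r : V → ℝ) (L : ℝ), (∀ u, r u < L) ∧ DiskRep G c r := by
  constructor
  · rintro ⟨a, b, t, ⟨hab, ht, hadj⟩, hlen⟩
    refine ⟨a, fun u => b u - a u - t u, ?_⟩
    rcases isEmpty_or_nonempty V with hV | ⟨⟨w⟩⟩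
    · exact ⟨1, fun u => (hV.false u).elim, fun u v _ => (hV.false u).elim⟩
    refine ⟨b w - a w, fun u => show b u - a u - t u < b w - a w by
      have := hlen u w; linarith [ht u], fun u v huv => ?_⟩
    rw [hadj u v huv]
    have hL := hlen v u
    have e1 : min (b u) (b v) - max (a u) (a v) = (b u - a u) - |a u - a v| := by
      have h := normMin (a u) (a v) (b u - a u)
      rw [show a u + (b u - a u) = b u by ring,
          show a v + (b u - a u) = b v by linarith] at h
      exact h
    have e2 : max (t u) (t v) =
        (b u - a u) - min (b u - a u - t u) (b v - a v - t v) := by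
      have h := normMax (b u - a u - t u) (b v - a v - t v) (b u - a u)
      have e3 : b u - a u - (b u - a u - t u) = t u := by ring
      have e4 : b u - a u - (b v - a v - t v) = t v := by rw [hL]; ring
      rw [e3, e4] at h
      linarith [h]
    rw [e1, e2]
    exact tolIff' (b u - a u) _ _
      (lt_of_le_of_lt (min_le_left _ _) (by linarith [ht u]))
  · rintro ⟨c, r, L, hrL, hdisk⟩
    set L' : ℝ := max L 0 + 1 with hL'
    have hL'r : ∀ u, r u < L' := fun u =>
      lt_of_lt_of_le (hrL u) (le_trans (le_max_left _ _) (by linarith))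
    have hL'0 : 0 < L' := by positivity
    refine ⟨c, fun u => c u + L', fun u => L' - r u,
      ⟨fun u => show c u ≤ c u + L' by linarith,
       fun u => show (0:ℝ) < L' - r u by linarith [hL'r u], fun u v huv => ?_⟩,
      fun u v => by ring⟩
    rw [hdisk u v huv]
    simp only
    rw [normMin, normMax]
    exact (tolIff' L' _ _
      (lt_of_le_of_lt (min_le_left _ _) (hL'r u))).symm

/-- With finitely many vertices, any disk representation can be fixed to have
nonnegative radii: vertices with negative radius are isolated and can be moved
to fresh positions with radius 0. -/
lemma disk_fix [Fintype V] (G : SimpleGraph V) (c r : V → ℝ) (hdisk : DiskRep G c r) :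
    ∃ c' r' : V → ℝ, (∀ u, 0 ≤ r' u) ∧ DiskRep G c' r' := by
  obtain ⟨M, hM⟩ : ∃ M, ∀ u, c u ≤ M := Finite.exists_le c
  set ι : V → ℝ := fun u => ((Fintype.equivFin V u : ℕ) : ℝ) with hι
  have hιinj : Function.Injective ι := by
    intro x y hxy
    apply (Fintype.equivFin V).injective
    exact Fin.val_injective (Nat.cast_injective hxy)
  set c' : V → ℝ := fun u => if 0 ≤ r u then c u else M + 1 + ι u with hc'
  set r' : V → ℝ := fun u => max (r u) 0 with hr'
  refine ⟨c', r', fun u => le_max_right _ _, fun u v huv => ?_⟩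
  rw [hdisk u v huv]
  by_cases hu : 0 ≤ r u
  · by_cases hv : 0 ≤ r v
    · have e1 : c' u = c u := if_pos hu
      have e2 : c' v = c v := if_pos hv
      have e3 : r' u = r u := max_eq_left hu
      have e4 : r' v = r v := max_eq_left hv
      rw [e1, e2, e3, e4]
    · -- v has negative radius: both sides false
      refine iff_of_false (not_le.mpr ?_) (not_le.mpr ?_)
      · calc min (r u) (r v) ≤ r v := min_le_right _ _
          _ < 0 := not_le.mp hv
          _ ≤ |c u - c v| := abs_nonneg _
      · have e4 : r' v = 0 := max_eq_right (le_of_lt (not_le.mp hv))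
        have hne : c' u ≠ c' v := by
          have e1 : c' u = c u := if_pos hu
          have e2 : c' v = M + 1 + ι v := if_neg hv
          rw [e1, e2]
          have h0 : (0:ℝ) ≤ ι v := Nat.cast_nonneg _
          intro hEq; have := hM u; linarith
        calc min (r' u) (r' v) ≤ r' v := min_le_right _ _
          _ = 0 := e4
          _ < |c' u - c' v| := abs_pos.mpr (sub_ne_zero_of_ne hne)
  · -- u has negative radius: both sides false
    refine iff_of_false (not_le.mpr ?_) (not_le.mpr ?_)
    · calc min (r u) (r v) ≤ r u := min_le_left _ _
        _ < 0 := not_le.mp hu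
        _ ≤ |c u - c v| := abs_nonneg _
    · have e3 : r' u = 0 := max_eq_right (le_of_lt (not_le.mp hu))
      have hne : c' u ≠ c' v := by
        have e1 : c' u = M + 1 + ι u := if_neg hu
        rw [e1]
        by_cases hv : 0 ≤ r v
        · have e2 : c' v = c v := if_pos hv
          rw [e2]
          have h0 : (0:ℝ) ≤ ι u := Nat.cast_nonneg _
          intro hEq; have := hM v; linarith
        · have e2 : c' v = M + 1 + ι v := if_neg hv
          rw [e2]
          intro hEq
          exact huv (hιinj (by linarith))
      calc min (r' u) (r' v) ≤ r' u := min_le_left _ _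
        _ = 0 := e3
        _ < |c' u - c' v| := abs_pos.mpr (sub_ne_zero_of_ne hne)


/-- A finite simple graph is a central-max-point tolerance graph (CMPTG) iff it is a
unit-max-tolerance graph (UMTG). -/
theorem cmptg_iff_umtg [Fintype V] (G : SimpleGraph V) :
    IsCMPTG G ↔ IsUMTG G := by
  rw [cmptg_iff_disk, umtg_iff_disk]
  constructor
  · rintro ⟨c, r, hr, hdisk⟩
    obtain ⟨M, hM⟩ : ∃ M, ∀ u, r u ≤ M := Finite.exists_le r
    exact ⟨c, r, M + 1, fun u => by linarith [hM u], hdisk⟩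
  · rintro ⟨c, r, L, _, hdisk⟩
    obtain ⟨c', r', hr', hdisk'⟩ := disk_fix G c r hdisk
    exact ⟨c', r', hr', hdisk'⟩
end

section
/- A finite simple graph G is a proper central-max-point tolerance graph (PCMPTG) if and only if G is a unit central-max-point tolerance graph (UCMPTG). -/
variable {V : Type*}

/-- A proper CMPTG: a central MPT representation in which no interval properly
contains another. -/
def IsPCMPTG (G : SimpleGraph V) : Prop :=
  ∃ a b : V → ℝ, IsMPTRep G a b (fun u => (a u + b u) / 2) ∧
    ∀ u v : V, u ≠ v → ¬(a u ≤ a v ∧ b v ≤ b u ∧ ¬(a u = a v ∧ b u = b v))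

/-- A unit CMPTG: a central MPT representation in which all intervals have the same
length. -/
def IsUCMPTG (G : SimpleGraph V) : Prop :=
  ∃ a b : V → ℝ, IsMPTRep G a b (fun u => (a u + b u) / 2) ∧
    ∀ u v : V, b u - a u = b v - a v

lemma exists_chain {n : ℕ} (R : Fin n → Fin n → Prop)
    (umb : ∀ i j l : Fin n, i < j → j < l → R i l → R i j ∧ R j l) :
    ∃ q : Fin n → ℝ, ∀ i j : Fin n, i < j →
      q i < q j ∧ (R i j → q j - q i < 1) ∧ (¬ R i j → 1 < q j - q i) := by
  classical
  suffices h : ∀ m : ℕ, ∃ q : Fin n → ℝ, ∀ i j : Fin n, i < j → (j : ℕ) < m →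
      q i < q j ∧ (R i j → q j - q i < 1) ∧ (¬ R i j → 1 < q j - q i) by
    obtain ⟨q, hq⟩ := h n
    exact ⟨q, fun i j hij => hq i j hij j.isLt⟩
  intro m
  induction m with
  | zero => exact ⟨fun _ => 0, fun i j _ h => absurd h (Nat.not_lt_zero _)⟩
  | succ m ih =>
    obtain ⟨q, hq⟩ := ih
    by_cases hm : m < n
    · set M : Fin n := ⟨m, hm⟩ with hM
      set P : Fin n := ⟨m - 1, by omega⟩ with hP
      have hmono : ∀ i : Fin n, (i : ℕ) < m → q i ≤ q P := by
        intro i hi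
        rcases eq_or_lt_of_le (by omega : (i : ℕ) ≤ m - 1) with h | h
        · exact le_of_eq (congrArg q (Fin.ext h))
        · exact (hq i P (by exact h) (by show m - 1 < m; omega)).1.le
      by_cases hex : ∃ j : Fin n, j < M ∧ R j M
      · -- neighbor case
        set S : Finset (Fin n) := Finset.univ.filter (fun j => j < M ∧ R j M) with hSdef
        have hS : S.Nonempty := by
          obtain ⟨j, hj⟩ := hex
          exact ⟨j, by simp [hSdef, hj.1, hj.2]⟩
        set k := S.min' hS with hkdef
        have hkmem : k < M ∧ R k M := by
          have := S.min'_mem hS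
          simpa [hSdef] using this
        have hkmin : ∀ j : Fin n, j < k → ¬ R j M := by
          intro j hjk hR
          have hjM : j < M := hjk.trans hkmem.1
          have : k ≤ j := S.min'_le j (by simp [hSdef, hjM, hR])
          exact absurd hjk (not_lt.mpr this)
        have hkm : (k : ℕ) < m := hkmem.1
        have hm0 : 0 < m := by omega
        have hPk : q P < q k + 1 := by
          rcases eq_or_lt_of_le (by omega : (k : ℕ) ≤ m - 1) with h | h
          · rw [show k = P from Fin.ext h]; linarith
          · have hkltP : k < P := by exact h
            have hPM : P < M := by show m - 1 < m; omega
            have hR : R k P := (umb k P M hkltP hPM hkmem.2).1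
            have := (hq k P hkltP (by show m - 1 < m; omega)).2.1 hR
            linarith
        obtain ⟨L, hLlt, hLP, hLK⟩ :
            ∃ L : ℝ, L < q k + 1 ∧ q P ≤ L ∧
              ∀ _ : 0 < (k : ℕ),
                q ⟨(k : ℕ) - 1, lt_of_le_of_lt (Nat.sub_le _ _) k.isLt⟩ + 1 ≤ L := by
          by_cases hk0 : 0 < (k : ℕ)
          · set K : Fin n := ⟨(k : ℕ) - 1, lt_of_le_of_lt (Nat.sub_le _ _) k.isLt⟩ with hK
            have hKq : q K < q k := (hq K k (by show (k:ℕ)-1 < (k:ℕ); omega) (by omega)).1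
            exact ⟨max (q P) (q K + 1), max_lt hPk (by linarith), le_max_left _ _,
              fun _ => le_max_right _ _⟩
          · exact ⟨q P, hPk, le_refl _, fun h0 => absurd h0 hk0⟩
        set c : ℝ := (L + (q k + 1)) / 2 with hc
        have hc1 : L < c := by rw [hc]; linarith
        have hc2 : c < q k + 1 := by rw [hc]; linarith
        refine ⟨Function.update q M c, ?_⟩
        intro i j hij hjm
        rcases Nat.lt_succ_iff_lt_or_eq.mp hjm with hjm' | hjm'
        · have hi' : (i : ℕ) < m := lt_trans hij hjm'
          have hiM : i ≠ M := fun h => by rw [h] at hi'; exact lt_irrefl m hi'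
          have hjM : j ≠ M := fun h => by rw [h] at hjm'; exact lt_irrefl m hjm'
          rw [Function.update_of_ne hiM, Function.update_of_ne hjM]
          exact hq i j hij hjm'
        · have hjM : j = M := Fin.ext hjm'
          subst hjM
          have hiM : i ≠ M := ne_of_lt hij
          rw [Function.update_of_ne hiM, Function.update_self]
          have hi' : (i : ℕ) < m := hij
          have hiP : q i ≤ q P := hmono i hi'
          refine ⟨by linarith, ?_, ?_⟩
          · intro hR
            have hki : k ≤ i := not_lt.mp (fun h => hkmin i h hR)
            have hqk : q k ≤ q i := by
              rcases eq_or_lt_of_le hki with h | h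
              · exact le_of_eq (congrArg q h)
              · exact (hq k i h hi').1.le
            linarith
          · intro hnR
            have hik : i < k := by
              rcases lt_or_ge i k with h | h
              · exact h
              · exfalso
                rcases eq_or_lt_of_le h with h' | h'
                · exact hnR (h' ▸ hkmem.2)
                · exact hnR (umb k i M h' hij hkmem.2).2
            have hk0 : 0 < (k : ℕ) := by
              have : (i : ℕ) < (k : ℕ) := hik
              omega
            set K : Fin n := ⟨(k : ℕ) - 1, lt_of_le_of_lt (Nat.sub_le _ _) k.isLt⟩ with hK
            have hiK : q i ≤ q K := by
              rcases eq_or_lt_of_le (by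
                  have : (i : ℕ) < (k : ℕ) := hik
                  omega : (i : ℕ) ≤ (k : ℕ) - 1) with h | h
              · exact le_of_eq (congrArg q (Fin.ext h))
              · exact (hq i K (by exact h) (by show (k : ℕ) - 1 < m; omega)).1.le
            have := hLK hk0
            linarith
      · -- no earlier neighbor
        set c : ℝ := q P + 2 with hc
        refine ⟨Function.update q M c, ?_⟩
        intro i j hij hjm
        rcases Nat.lt_succ_iff_lt_or_eq.mp hjm with hjm' | hjm'
        · have hi' : (i : ℕ) < m := lt_trans hij hjm'
          have hiM : i ≠ M := fun h => by rw [h] at hi'; exact lt_irrefl m hi'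
          have hjM : j ≠ M := fun h => by rw [h] at hjm'; exact lt_irrefl m hjm'
          rw [Function.update_of_ne hiM, Function.update_of_ne hjM]
          exact hq i j hij hjm'
        · have hjM : j = M := Fin.ext hjm'
          subst hjM
          have hiM : i ≠ M := ne_of_lt hij
          rw [Function.update_of_ne hiM, Function.update_self]
          have hi' : (i : ℕ) < m := hij
          have hiP : q i ≤ q P := hmono i hi'
          exact ⟨by linarith, fun hR => absurd ⟨i, hij, hR⟩ hex, fun _ => by linarith⟩
    · exact ⟨q, fun i j hij hjm => hq i j hij (lt_of_lt_of_le j.isLt (not_lt.mp hm))⟩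

/-- A finite simple graph is a proper central-max-point tolerance graph iff it is a
unit central-max-point tolerance graph. -/
theorem pcmptg_iff_ucmptg [Fintype V] (G : SimpleGraph V) :
    IsPCMPTG G ↔ IsUCMPTG G := by
  constructor
  · rintro ⟨a, b, hrep, hprop⟩
    obtain ⟨hab, hmem, hadj⟩ := hrep
    -- order facts from properness
    have hb : ∀ u v : V, a u ≤ a v → b u ≤ b v := by
      intro u v h
      by_contra hbb
      push_neg at hbb
      rcases eq_or_ne u v with rfl | huv
      · exact lt_irrefl _ hbb
      · exact hprop u v huv ⟨h, hbb.le, fun hh => absurd hh.2 (ne_of_gt hbb)⟩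
    set p : V → ℝ := fun u => (a u + b u) / 2 with hp
    have hpmem : ∀ u, a u ≤ p u ∧ p u ≤ b u := by
      intro u
      have := hab u
      constructor <;> simp only [hp] <;> linarith
    have hpm : ∀ u v : V, a u ≤ a v → p u ≤ p v := by
      intro u v h
      have := hb u v h
      simp only [hp]; linarith
    -- adjacency characterization
    have hAdj' : ∀ u v : V, u ≠ v → a u ≤ a v →
        (G.Adj u v ↔ a v ≤ p u ∧ p v ≤ b u) := by
      intro u v huv hle
      have hbv := hb u v hle
      have h1 := hpmem u
      have h2 := hpmem v
      rw [hadj u v huv]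
      simp only [Set.mem_inter_iff, Set.mem_Icc]
      constructor
      · rintro ⟨⟨_, h3⟩, h4, _⟩
        exact ⟨h3.1, h4.2⟩
      · rintro ⟨hA, hB⟩
        exact ⟨⟨⟨h1.1, h1.2⟩, hA, by linarith⟩, ⟨by linarith, hB⟩, h2.1, h2.2⟩
    -- sort vertices
    set n := Fintype.card V with hn
    set e : Fin n ≃ V := (Fintype.equivFin V).symm with he
    set w : Fin n ≃ V := (Tuple.sort (a ∘ e)).trans e with hw
    have hmonA : ∀ i j : Fin n, i ≤ j → a (w i) ≤ a (w j) := by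
      intro i j hij
      exact Tuple.monotone_sort (a ∘ e) hij
    set R : Fin n → Fin n → Prop := fun i j => G.Adj (w i) (w j) with hR
    have hwne : ∀ i j : Fin n, i ≠ j → w i ≠ w j := fun i j h => w.injective.ne h
    have umb : ∀ i j l : Fin n, i < j → j < l → R i l → R i j ∧ R j l := by
      intro i j l hij hjl hRil
      have hil : i < l := hij.trans hjl
      have hAij := hmonA i j hij.le
      have hAjl := hmonA j l hjl.le
      have hAil := hmonA i l hil.le
      have hmain := (hAdj' (w i) (w l) (hwne i l (ne_of_lt hil)) hAil).mp hRil
      constructor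
      · refine (hAdj' (w i) (w j) (hwne i j (ne_of_lt hij)) hAij).mpr ?_
        have hpjl := hpm (w j) (w l) hAjl
        exact ⟨le_trans hAjl hmain.1, le_trans hpjl hmain.2⟩
      · refine (hAdj' (w j) (w l) (hwne j l (ne_of_lt hjl)) hAjl).mpr ?_
        have hpij := hpm (w i) (w j) hAij
        have hbij := hb (w i) (w j) hAij
        exact ⟨by linarith [hmain.1], by linarith [hmain.2]⟩
    obtain ⟨q, hq⟩ := exists_chain R umb
    -- the unit representation
    refine ⟨fun u => q (w.symm u) - 1, fun u => q (w.symm u) + 1, ⟨?_, ?_, ?_⟩, ?_⟩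
    · intro u; dsimp only; linarith
    · intro u
      simp only [Set.mem_Icc]
      constructor <;> linarith
    · intro u v huv
      have hij : w.symm u ≠ w.symm v := w.symm.injective.ne huv
      have key : G.Adj u v ↔
          (q (w.symm v) - 1 ≤ q (w.symm u) ∧ q (w.symm u) ≤ q (w.symm v) + 1) := by
        rcases lt_or_gt_of_ne hij with h | h
        · have := hq (w.symm u) (w.symm v) h
          have hadjeq : G.Adj u v ↔ R (w.symm u) (w.symm v) := by
            rw [hR]; simp
          rw [hadjeq]
          constructor
          · intro hRuv
            have := this.2.1 hRuv
            have := (hq (w.symm u) (w.symm v) h).1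
            constructor <;> linarith
          · rintro ⟨h1', h2'⟩
            by_contra hnR
            have := this.2.2 hnR
            linarith
        · have := hq (w.symm v) (w.symm u) h
          have hadjeq : G.Adj u v ↔ R (w.symm v) (w.symm u) := by
            rw [hR, G.adj_comm]; simp
          rw [hadjeq]
          constructor
          · intro hRuv
            have := this.2.1 hRuv
            have := (hq (w.symm v) (w.symm u) h).1
            constructor <;> linarith
          · rintro ⟨h1', h2'⟩
            by_contra hnR
            have := this.2.2 hnR
            linarith
      rw [key]
      simp only [Set.mem_inter_iff, Set.mem_Icc]
      constructor
      · rintro ⟨h1', h2'⟩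
        refine ⟨⟨⟨by linarith, by linarith⟩, by linarith, by linarith⟩,
          ⟨by linarith, by linarith⟩, by linarith, by linarith⟩
      · rintro ⟨⟨_, h3', h4'⟩, _⟩
        exact ⟨by linarith, by linarith⟩
    · intro u v; ring
  · rintro ⟨a, b, hrep, hunit⟩
    refine ⟨a, b, hrep, ?_⟩
    rintro u v huv ⟨h1, h2, h3⟩
    have := hunit u v
    exact h3 ⟨by linarith, by linarith⟩
end

section
/- If a finite simple graph G=(V,E) is a central-max-point tolerance graph (CMPTG), then there exists a linear order < on V such that for all vertices x<u<v<y: if xv∈E and uy∈E, then uv∈E and moreover xu∈E or vy∈E. -/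
/-!
Order the vertices by the centres `c u` of their intervals, breaking ties arbitrarily. With
central points, `u` and `v` are adjacent iff `|c u - c v| ≤ min (ρ u) (ρ v)`, where `ρ` is the
half-length. For `c x ≤ c u ≤ c v ≤ c y`, the edges `xv` and `uy` give `uv` at once, since
`[c u, c v]` lies inside both `[c x, c v]` and `[c u, c y]`. If neither `xu` nor `vy` were an
edge, then `c u - c x > ρ u ≥ c y - c u` and `c y - c v > ρ v ≥ c v - c x`, and adding the two
gives `c u > c v`.
-/

variable {V : Type*}

open Metric Set

theorem exists_isStrictTotalOrder_monotone {α β : Type*} [LinearOrder β] (f : α → β) :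
    ∃ r : α → α → Prop, IsStrictTotalOrder α r ∧ ∀ x y, r x y → f x ≤ f y := by
  classical
  let _ : LinearOrder α := linearOrderOfSTO WellOrderingRel
  let g : α ↪ β ×ₗ α := ⟨fun x => toLex (f x, x), fun x y h => congrArg (fun z => (ofLex z).2) h⟩
  refine ⟨g ⁻¹'o (· < ·), (RelEmbedding.preimage g _).isStrictTotalOrder, fun x y h => ?_⟩
  rcases Prod.Lex.lt_iff.1 h with hlt | ⟨heq, -⟩
  exacts [hlt.le, heq.le]

theorem dist_four_point_of_le {x u v y rx ru rv ry : ℝ} (hxu : x ≤ u) (huv : u ≤ v)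
    (hvy : v ≤ y) (hxv : dist x v ≤ min rx rv) (huy : dist u y ≤ min ru ry) :
    dist u v ≤ min ru rv ∧ (dist x u ≤ min rx ru ∨ dist v y ≤ min rv ry) := by
  have dist_of_le : ∀ {s t : ℝ}, s ≤ t → dist s t = t - s := fun hst => by
    rw [Real.dist_eq, abs_sub_comm, abs_of_nonneg (sub_nonneg.2 hst)]
  rw [dist_of_le (hxu.trans huv), le_min_iff] at hxv
  rw [dist_of_le (huv.trans hvy), le_min_iff] at huy
  simp only [dist_of_le hxu, dist_of_le huv, dist_of_le hvy, le_min_iff]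
  refine ⟨⟨by linarith, by linarith⟩, ?_⟩
  by_cases hu : u - x ≤ ru
  · exact Or.inl ⟨by linarith, hu⟩
  · exact Or.inr ⟨by linarith, by linarith⟩

namespace IsMPTRep

variable {G : SimpleGraph V} {a b p : V → ℝ} {u v : V}

theorem adj_iff (h : IsMPTRep G a b p) (huv : u ≠ v) :
    G.Adj u v ↔ p u ∈ Icc (a v) (b v) ∧ p v ∈ Icc (a u) (b u) := by
  rw [h.2.2 u v huv]
  simp only [mem_inter_iff, h.2.1 u, h.2.1 v, true_and, and_true]

theorem adj_iff_dist_le_min (h : IsMPTRep G a b fun u => (a u + b u) / 2)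
    (huv : u ≠ v) :
    G.Adj u v ↔
      dist ((a u + b u) / 2) ((a v + b v) / 2) ≤ min ((b u - a u) / 2) ((b v - a v) / 2) := by
  rw [h.adj_iff huv, Real.Icc_eq_closedBall, Real.Icc_eq_closedBall, mem_closedBall,
    mem_closedBall', le_min_iff, and_comm]

end IsMPTRep

theorem cmptg_four_point_condition_general (G : SimpleGraph V) (hG : IsCMPTG G) :
    ∃ r : V → V → Prop, IsStrictTotalOrder V r ∧
      ∀ x u v y : V, r x u → r u v → r v y → G.Adj x v → G.Adj u y →
        G.Adj u v ∧ (G.Adj x u ∨ G.Adj v y) := by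
  obtain ⟨a, b, hrep⟩ := hG
  obtain ⟨r, hr, hmono⟩ := exists_isStrictTotalOrder_monotone fun u => (a u + b u) / 2
  refine ⟨r, hr, fun x u v y hxu huv hvy hxv huy => ?_⟩
  rw [hrep.adj_iff_dist_le_min (ne_of_irrefl (_root_.trans hxu huv))] at hxv
  rw [hrep.adj_iff_dist_le_min (ne_of_irrefl (_root_.trans huv hvy))] at huy
  rw [hrep.adj_iff_dist_le_min (ne_of_irrefl huv), hrep.adj_iff_dist_le_min (ne_of_irrefl hxu),
    hrep.adj_iff_dist_le_min (ne_of_irrefl hvy)]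
  exact dist_four_point_of_le (hmono _ _ hxu) (hmono _ _ huv) (hmono _ _ hvy) hxv huy

/-- If a finite simple graph is a CMPTG, then its vertices admit a linear order `<`
such that for all `x < u < v < y`, if `xv` and `uy` are edges then `uv` is an edge and
moreover `xu` or `vy` is an edge. -/
theorem cmptg_four_point_condition [Fintype V] (G : SimpleGraph V) (hG : IsCMPTG G) :
    ∃ r : V → V → Prop, IsStrictTotalOrder V r ∧
      ∀ x u v y : V, r x u → r u v → r v y → G.Adj x v → G.Adj u y →
        G.Adj u v ∧ (G.Adj x u ∨ G.Adj v y) :=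
  cmptg_four_point_condition_general G hG
end

section
/- Let G=(V,E) be a finite simple graph with a vertex enumeration v_1,…,v_n and natural numbers x_1<x_2<⋯<x_n such that: (i) for all indices a<b<c<d, if v_a v_c∈E and v_b v_d∈E then v_b v_c∈E; and (ii) for each i, letting i_1 be the least index such that i_1=i or v_i v_{i_1}∈E, and i_2 the greatest index such that i_2=i or v_i v_{i_2}∈E, one has x_{i_2+1}−x_i > x_i−x_{i_1} whenever i_2<n, and x_i−x_{i_1−1} > x_{i_2}−x_i whenever i_1>1. Then G is a central-max-point tolerance graph (CMPTG). -/
variable {V : Type*}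

/-- Sufficient condition for a finite simple graph to be a CMPTG: there is an
enumeration `v 0, …, v (n-1)` of the vertices and strictly increasing natural numbers
`x 0 < … < x (n-1)` such that (i) the MPTG 4-point condition holds for the enumeration,
and (ii) for each `i`, with `i₁` the least index with `i₁ = i` or `v i ~ v i₁`, and
`i₂` the greatest index with `i₂ = i` or `v i ~ v i₂`, one has
`x (i₂+1) - x i > x i - x i₁` whenever `i₂` is not the last index, and
`x i - x (i₁-1) > x i₂ - x i` whenever `i₁` is not the first index. -/
theorem cmptg_of_mptg_spacing_condition [Fintype V] (G : SimpleGraph V) (n : ℕ)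
    (v : Fin n → V) (hv : Function.Bijective v)
    (x : Fin n → ℕ) (hx : StrictMono x)
    (h4 : ∀ a b c d : Fin n, a < b → b < c → c < d →
      G.Adj (v a) (v c) → G.Adj (v b) (v d) → G.Adj (v b) (v c))
    (hspace : ∀ i i₁ i₂ : Fin n,
      (i₁ = i ∨ G.Adj (v i) (v i₁)) →
      (∀ j : Fin n, (j = i ∨ G.Adj (v i) (v j)) → i₁ ≤ j) →
      (i₂ = i ∨ G.Adj (v i) (v i₂)) →
      (∀ j : Fin n, (j = i ∨ G.Adj (v i) (v j)) → j ≤ i₂) →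
      (∀ h : (i₂ : ℕ) + 1 < n,
        (x i : ℤ) - (x i₁ : ℤ) < (x ⟨(i₂ : ℕ) + 1, h⟩ : ℤ) - (x i : ℤ)) ∧
      (∀ _ : 0 < (i₁ : ℕ),
        (x i₂ : ℤ) - (x i : ℤ) <
          (x i : ℤ) - (x ⟨(i₁ : ℕ) - 1, lt_of_le_of_lt (Nat.sub_le _ _) i₁.isLt⟩ : ℤ))) :
    IsCMPTG G := by
  classical
  -- sets of neighbors (including self)
  set S : Fin n → Finset (Fin n) :=
    fun i => Finset.univ.filter (fun j => j = i ∨ G.Adj (v i) (v j)) with hS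
  have hSne : ∀ i, (S i).Nonempty := fun i => ⟨i, by simp [hS]⟩
  set m1 : Fin n → Fin n := fun i => (S i).min' (hSne i) with hm1
  set m2 : Fin n → Fin n := fun i => (S i).max' (hSne i) with hm2
  have hm1mem : ∀ i, m1 i = i ∨ G.Adj (v i) (v (m1 i)) := fun i => by
    have := (S i).min'_mem (hSne i); simpa [hS] using this
  have hm2mem : ∀ i, m2 i = i ∨ G.Adj (v i) (v (m2 i)) := fun i => by
    have := (S i).max'_mem (hSne i); simpa [hS] using this
  have hm1le : ∀ i j, (j = i ∨ G.Adj (v i) (v j)) → m1 i ≤ j :=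
    fun i j h => Finset.min'_le _ _ (by simp [hS, h])
  have hm2le : ∀ i j, (j = i ∨ G.Adj (v i) (v j)) → j ≤ m2 i :=
    fun i j h => Finset.le_max' _ _ (by simp [hS, h])
  -- radii
  set r : Fin n → ℝ := fun i => max ((x i : ℝ) - x (m1 i)) ((x (m2 i) : ℝ) - x i) with hr
  have hr0 : ∀ i, 0 ≤ r i := by
    intro i
    have h1 : x (m1 i) ≤ x i := hx.monotone (hm1le i i (Or.inl rfl))
    have h1' : (x (m1 i) : ℝ) ≤ x i := by exact_mod_cast h1
    exact le_max_of_le_left (by linarith)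
  -- key adjacency characterization
  have key : ∀ i j : Fin n, i < j →
      (G.Adj (v i) (v j) ↔ ((x j : ℝ) - x i ≤ r i ∧ (x j : ℝ) - x i ≤ r j)) := by
    intro i j hij
    constructor
    · intro hadj
      constructor
      · have h1 : j ≤ m2 i := hm2le i j (Or.inr hadj)
        have h2 : (x j : ℝ) ≤ x (m2 i) := by exact_mod_cast hx.monotone h1
        exact le_max_of_le_right (by linarith)
      · have h1 : m1 j ≤ i := hm1le j i (Or.inr hadj.symm)
        have h2 : (x (m1 j) : ℝ) ≤ x i := by exact_mod_cast hx.monotone h1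
        exact le_max_of_le_left (by linarith)
    · rintro ⟨h1, h2⟩
      -- Step 1: j ≤ m2 i
      have hji2 : j ≤ m2 i := by
        by_contra hc
        push_neg at hc
        have hlt : ((m2 i : ℕ) + 1) < n := lt_of_le_of_lt (Nat.succ_le_of_lt hc) j.isLt
        have hs := (hspace i (m1 i) (m2 i) (hm1mem i) (hm1le i) (hm2mem i) (hm2le i)).1 hlt
        have hs' : (x i : ℝ) - x (m1 i) < (x ⟨(m2 i : ℕ) + 1, hlt⟩ : ℝ) - x i := by
          exact_mod_cast hs
        have hle : (⟨(m2 i : ℕ) + 1, hlt⟩ : Fin n) ≤ j := by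
          simp only [Fin.le_def]
          exact Nat.succ_le_of_lt hc
        have hxj : (x ⟨(m2 i : ℕ) + 1, hlt⟩ : ℝ) ≤ x j := by
          exact_mod_cast hx.monotone hle
        rcases max_cases ((x i : ℝ) - x (m1 i)) ((x (m2 i) : ℝ) - x i) with ⟨he, _⟩ | ⟨he, _⟩
        · rw [hr] at h1; simp only at h1; rw [he] at h1; linarith
        · rw [hr] at h1; simp only at h1; rw [he] at h1
          have : (x j : ℝ) ≤ x (m2 i) := by linarith
          have : x j ≤ x (m2 i) := by exact_mod_cast this
          exact absurd ((hx.le_iff_le).mp this) (not_le.mpr hc)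
      -- Step 2: m1 j ≤ i
      have hij1 : m1 j ≤ i := by
        by_contra hc
        push_neg at hc
        have hpos : 0 < (m1 j : ℕ) := lt_of_le_of_lt (Nat.zero_le _) hc
        have hs := (hspace j (m1 j) (m2 j) (hm1mem j) (hm1le j) (hm2mem j) (hm2le j)).2 hpos
        have hs' : (x (m2 j) : ℝ) - x j <
            (x j : ℝ) - x ⟨(m1 j : ℕ) - 1, lt_of_le_of_lt (Nat.sub_le _ _) (m1 j).isLt⟩ := by
          exact_mod_cast hs
        have hle : i ≤ (⟨(m1 j : ℕ) - 1, lt_of_le_of_lt (Nat.sub_le _ _) (m1 j).isLt⟩ : Fin n) := by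
          simp only [Fin.le_def]
          exact Nat.le_sub_one_of_lt hc
        have hxi : (x i : ℝ) ≤ x ⟨(m1 j : ℕ) - 1, lt_of_le_of_lt (Nat.sub_le _ _) (m1 j).isLt⟩ := by
          exact_mod_cast hx.monotone hle
        rcases max_cases ((x j : ℝ) - x (m1 j)) ((x (m2 j) : ℝ) - x j) with ⟨he, _⟩ | ⟨he, _⟩
        · rw [hr] at h2; simp only at h2; rw [he] at h2
          have : (x (m1 j) : ℝ) ≤ x i := by linarith
          have : x (m1 j) ≤ x i := by exact_mod_cast this
          exact absurd ((hx.le_iff_le).mp this) (not_le.mpr hc)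
        · rw [hr] at h2; simp only at h2; rw [he] at h2; linarith
      -- Step 3: adjacency
      have hadj2 : G.Adj (v i) (v (m2 i)) := by
        rcases hm2mem i with h | h
        · exact absurd (h ▸ hji2) (not_le.mpr hij)
        · exact h
      have hadj1 : G.Adj (v j) (v (m1 j)) := by
        rcases hm1mem j with h | h
        · exact absurd (h ▸ hij1) (not_le.mpr hij)
        · exact h
      by_cases he1 : m1 j = i
      · exact (he1 ▸ hadj1).symm
      by_cases he2 : m2 i = j
      · exact he2 ▸ hadj2
      · exact h4 (m1 j) i j (m2 i) (lt_of_le_of_ne hij1 he1) hij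
          (lt_of_le_of_ne hji2 (Ne.symm he2)) hadj1.symm hadj2
  -- build the representation
  set e : Fin n ≃ V := Equiv.ofBijective v hv with he
  set idx : V → Fin n := fun u => e.symm u with hidx
  have hvidx : ∀ u, v (idx u) = u := fun u => e.apply_symm_apply u
  refine ⟨fun u => (x (idx u) : ℝ) - r (idx u), fun u => (x (idx u) : ℝ) + r (idx u),
    ?_, ?_, ?_⟩
  · intro u; simp only; linarith [hr0 (idx u)]
  · intro u
    simp only [Set.mem_Icc]
    constructor <;> [linarith [hr0 (idx u)]; linarith [hr0 (idx u)]]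
  · intro u w huw
    have hne : idx u ≠ idx w := fun h => huw (by rw [← hvidx u, ← hvidx w, h])
    have hadjiff : G.Adj u w ↔ G.Adj (v (idx u)) (v (idx w)) := by
      rw [hvidx, hvidx]
    simp only [Set.mem_inter_iff, Set.mem_Icc]
    rcases hne.lt_or_gt with h | h
    · have hxle : (x (idx u) : ℝ) ≤ x (idx w) := by exact_mod_cast (hx.monotone h.le)
      rw [hadjiff, key _ _ h]
      constructor
      · rintro ⟨h1, h2⟩
        refine ⟨⟨⟨by linarith, by linarith⟩, ⟨by linarith, by linarith⟩⟩,
          ⟨⟨by linarith, by linarith⟩, ⟨by linarith, by linarith⟩⟩⟩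
      · rintro ⟨⟨_, ⟨hA, _⟩⟩, ⟨⟨_, hB⟩, _⟩⟩
        constructor <;> linarith
    · have hxle : (x (idx w) : ℝ) ≤ x (idx u) := by exact_mod_cast (hx.monotone h.le)
      rw [hadjiff, G.adj_comm, key _ _ h]
      constructor
      · rintro ⟨h1, h2⟩
        refine ⟨⟨⟨by linarith, by linarith⟩, ⟨by linarith, by linarith⟩⟩,
          ⟨⟨by linarith, by linarith⟩, ⟨by linarith, by linarith⟩⟩⟩
      · rintro ⟨⟨⟨_, hB⟩, _⟩, ⟨_, ⟨hA, _⟩⟩⟩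
        constructor <;> linarith
end

section
/- If G=(V,E) is a central-max-point tolerance graph (CMPTG) and u,v∈V are distinct non-adjacent vertices, then the subgraph of G induced on the set N(u)∩N(v) of common neighbors of u and v is a proper interval graph. -/
variable {V : Type*}

/-- A proper interval graph: each vertex gets a closed real interval, distinct vertices
are adjacent iff their intervals intersect, and no interval properly contains another. -/
def IsProperIntervalGraph (G : SimpleGraph V) : Prop :=
  ∃ a b : V → ℝ, (∀ u, a u ≤ b u) ∧
    (∀ u v : V, u ≠ v →
      (G.Adj u v ↔ (Set.Icc (a u) (b u) ∩ Set.Icc (a v) (b v)).Nonempty)) ∧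
    ∀ u v : V, u ≠ v → ¬(a u ≤ a v ∧ b v ≤ b u ∧ ¬(a u = a v ∧ b u = b v))


/-!
Write `m w = (a w + b w) / 2` for the centre of the interval of `w`. If `u` and `v` are not
adjacent, then up to swapping them and reflecting the line, `m u < a v`. Every common neighbour `w`
then has `a w ≤ m u`, `m v ≤ b w` and `m u < m w < 2 m v - m u`; with all intervals reaching over
`[m u, m v]`, the lower-endpoint conditions of adjacency hold automatically and the common
neighbourhood becomes a unit interval graph with unit `m v - m u`.
-/

section

variable {G : SimpleGraph V}

theorem IsProperIntervalGraph.of_abs_sub_le_iff (f : V → ℝ) {M : ℝ} (hM : 0 ≤ M)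
    (hadj : ∀ u v, u ≠ v → (G.Adj u v ↔ |f u - f v| ≤ M)) : IsProperIntervalGraph G := by
  refine ⟨f, fun u => f u + M, fun u => le_add_of_nonneg_right hM, fun u v huv => ?_, ?_⟩
  · rw [hadj u v huv, Set.Icc_inter_Icc, Set.nonempty_Icc, abs_sub_le_iff, max_le_iff,
      le_min_iff, le_min_iff]
    constructor
    · rintro ⟨h₁, h₂⟩
      exact ⟨⟨by linarith, by linarith⟩, by linarith, by linarith⟩
    · rintro ⟨⟨-, h₁⟩, h₂, -⟩
      exact ⟨by linarith, by linarith⟩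
  · rintro u v - ⟨hle, hle', hne⟩
    exact hne ⟨by linarith, by linarith⟩

variable {a b p : V → ℝ}

theorem IsMPTRep.adj_iff_s7 (hrep : IsMPTRep G a b p) {u v : V} (huv : u ≠ v) :
    G.Adj u v ↔ p u ∈ Set.Icc (a v) (b v) ∧ p v ∈ Set.Icc (a u) (b u) := by
  rw [hrep.2.2 u v huv, Set.mem_inter_iff, Set.mem_inter_iff]
  exact ⟨fun h => ⟨h.1.2, h.2.1⟩, fun h => ⟨⟨hrep.2.1 u, h.1⟩, h.2, hrep.2.1 v⟩⟩

theorem IsMPTRep.neg (hrep : IsMPTRep G a b p) : IsMPTRep G (-b) (-a) (-p) := by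
  refine ⟨fun u => neg_le_neg (hrep.1 u), fun u => ?_, fun u v huv => ?_⟩
  · simpa only [Pi.neg_apply, Set.neg_mem_Icc_iff, neg_neg] using hrep.2.1 u
  · simp only [Pi.neg_apply, Set.mem_inter_iff, Set.neg_mem_Icc_iff, neg_neg]
    exact hrep.2.2 u v huv

/-- Left endpoint of the interval of length `d - c` replacing `[a, b]`, where `a ≤ c` and
`d ≤ b`: if the centre lies right of `d` it becomes the left endpoint; otherwise the new interval
ends at `min b (2 d - c)`, so that it reaches exactly those centres right of `d` that `[a, b]`
contains. -/
noncomputable def unitLeftEndpoint (c d a b : ℝ) : ℝ :=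
  if (a + b) / 2 ≤ d then min b (2 * d - c) - (d - c) else (a + b) / 2

theorem abs_unitLeftEndpoint_sub_le_iff {c d a₁ b₁ a₂ b₂ : ℝ} (hcd : c ≤ d)
    (ha₁ : a₁ ≤ c) (hb₁ : d ≤ b₁) (hd₁ : (a₁ + b₁) / 2 < 2 * d - c)
    (ha₂ : a₂ ≤ c) (hb₂ : d ≤ b₂) (hd₂ : (a₂ + b₂) / 2 < 2 * d - c) :
    |unitLeftEndpoint c d a₁ b₁ - unitLeftEndpoint c d a₂ b₂| ≤ d - c ↔
      (a₁ + b₁) / 2 ≤ b₂ ∧ (a₂ + b₂) / 2 ≤ b₁ := by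
  unfold unitLeftEndpoint
  rw [abs_sub_le_iff]
  simp only [min_def]
  split_ifs <;> constructor <;> rintro ⟨h₁, h₂⟩ <;> constructor <;> linarith

theorem IsMPTRep.isProperIntervalGraph_induce_of_bounds
    (hrep : IsMPTRep G a b (fun u => (a u + b u) / 2)) {s : Set V} {c d : ℝ} (hcd : c ≤ d)
    (hs : ∀ w ∈ s, a w ≤ c ∧ d ≤ b w ∧ c < (a w + b w) / 2 ∧ (a w + b w) / 2 < 2 * d - c) :
    IsProperIntervalGraph (G.induce s) := by
  refine .of_abs_sub_le_iff (fun w : s => unitLeftEndpoint c d (a w) (b w))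
    (sub_nonneg.2 hcd) fun w x hwx => ?_
  obtain ⟨haw, hbw, hcw, hdw⟩ := hs w w.2
  obtain ⟨hax, hbx, hcx, hdx⟩ := hs x x.2
  rw [abs_unitLeftEndpoint_sub_le_iff hcd haw hbw hdw hax hbx hdx, SimpleGraph.induce_adj,
    hrep.adj_iff_s7 (Subtype.coe_ne_coe.2 hwx), Set.mem_Icc, Set.mem_Icc]
  constructor
  · rintro ⟨⟨-, h₁⟩, -, h₂⟩
    exact ⟨h₁, h₂⟩
  · rintro ⟨h₁, h₂⟩
    exact ⟨⟨by linarith, h₁⟩, by linarith, h₂⟩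

theorem IsMPTRep.isProperIntervalGraph_commonNeighbors_of_mid_lt
    (hrep : IsMPTRep G a b (fun u => (a u + b u) / 2)) {u v : V}
    (hlt : (a u + b u) / 2 < a v) :
    IsProperIntervalGraph (G.induce (G.neighborSet u ∩ G.neighborSet v)) := by
  refine hrep.isProperIntervalGraph_induce_of_bounds (c := (a u + b u) / 2)
    (d := (a v + b v) / 2) (by linarith [hrep.1 v]) fun w ⟨hu, hv⟩ => ?_
  have hwu := (hrep.adj_iff_s7 (G.ne_of_adj hu)).1 hu
  have hwv := (hrep.adj_iff_s7 (G.ne_of_adj hv)).1 hv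
  simp only [Set.mem_Icc] at hwu hwv
  exact ⟨hwu.1.1, hwv.1.2, by linarith, by linarith⟩

theorem IsMPTRep.isProperIntervalGraph_commonNeighbors_of_lt_mid
    (hrep : IsMPTRep G a b (fun u => (a u + b u) / 2)) {u v : V}
    (hlt : b v < (a u + b u) / 2) :
    IsProperIntervalGraph (G.induce (G.neighborSet u ∩ G.neighborSet v)) := by
  have hneg : IsMPTRep G (-b) (-a) (fun u => ((-b) u + (-a) u) / 2) := by
    convert hrep.neg using 1
    funext w
    simp only [Pi.neg_apply]
    ring
  refine hneg.isProperIntervalGraph_commonNeighbors_of_mid_lt ?_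
  simp only [Pi.neg_apply]
  linarith

end

theorem cmptg_common_neighborhood_properInterval_general (G : SimpleGraph V)
    (hG : IsCMPTG G) (u v : V) (huv : u ≠ v) (hadj : ¬ G.Adj u v) :
    IsProperIntervalGraph (G.induce (G.neighborSet u ∩ G.neighborSet v)) := by
  obtain ⟨a, b, hrep⟩ := hG
  have hfar := (hrep.adj_iff_s7 huv).not.1 hadj
  simp only [Set.mem_Icc, not_and_or, not_le] at hfar
  rcases hfar with (h | h) | (h | h)
  · exact hrep.isProperIntervalGraph_commonNeighbors_of_mid_lt h
  · exact hrep.isProperIntervalGraph_commonNeighbors_of_lt_mid h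
  · rw [Set.inter_comm]
    exact hrep.isProperIntervalGraph_commonNeighbors_of_mid_lt h
  · rw [Set.inter_comm]
    exact hrep.isProperIntervalGraph_commonNeighbors_of_lt_mid h

/-- In a CMPTG, the subgraph induced on the common neighborhood of two distinct
non-adjacent vertices is a proper interval graph. -/
theorem cmptg_common_neighborhood_properInterval [Fintype V] (G : SimpleGraph V)
    (hG : IsCMPTG G) (u v : V) (huv : u ≠ v) (hadj : ¬ G.Adj u v) :
    IsProperIntervalGraph (G.induce (G.neighborSet u ∩ G.neighborSet v)) :=
  cmptg_common_neighborhood_properInterval_general G hG u v huv hadj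
end

section
/- A finite simple graph G is an optimized graph if and only if G is a proper interval graph. -/
/-!
Both classes are the graphs admitting an umbrella ordering: a vertex order in which an edge `uw`
forces `uv` and `vw` for every `v` between `u` and `w`. Ordering by an optimal labelling, or by left
endpoints of a proper interval model, gives one. Conversely, inserting the vertices of an umbrella
ordering from left to right, each new vertex can be placed within distance `1` of exactly its
earlier neighbours (Roberts' construction). The resulting labels `x` satisfy `u ~ v ↔ |x u - x v| < 1`,
so they are an optimal labelling, and the closed intervals `[x u, x u + c]` for `c < 1` close enough
to `1` form a proper interval model.
-/

variable {V : Type*}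

/-- An optimized graph: vertices can be injectively labeled by reals so that from any
vertex, every neighbor is strictly closer (in label distance) than every non-neighbor
(other than the vertex itself). -/
def IsOptimizedGraph (G : SimpleGraph V) : Prop :=
  ∃ f : V → ℝ, Function.Injective f ∧
    ∀ u v w : V, G.Adj u v → w ≠ u → ¬ G.Adj u w → |f u - f v| < |f u - f w|

theorem Set.nonempty_Icc_inter_Icc_add_iff {a b c : ℝ} :
    (Set.Icc a (a + c) ∩ Set.Icc b (b + c)).Nonempty ↔ |a - b| ≤ c := by
  rw [Set.Icc_inter_Icc, Set.nonempty_Icc, abs_sub_le_iff, max_le_iff, le_min_iff, le_min_iff]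
  constructor
  · rintro ⟨⟨-, h⟩, h', -⟩
    constructor <;> linarith
  · rintro ⟨h, h'⟩
    refine ⟨⟨?_, ?_⟩, ?_, ?_⟩ <;> linarith

namespace SimpleGraph

variable {α β : Type*} {G : SimpleGraph V}

def IsUmbrellaOrdering [LinearOrder α] (G : SimpleGraph V) (σ : V → α) : Prop :=
  ∀ ⦃u v w⦄, σ u < σ v → σ v < σ w → G.Adj u w → G.Adj u v ∧ G.Adj v w

/-- A unit interval model: `x u` is the left end of an open unit interval. -/
def IsUnitIntervalLabeling (G : SimpleGraph V) (x : V → ℝ) : Prop :=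
  Function.Injective x ∧ ∀ ⦃u v⦄, u ≠ v → (G.Adj u v ↔ |x u - x v| < 1)

theorem isUmbrellaOrdering_of_neighbors_closer {f : V → ℝ}
    (hf : ∀ u v w, G.Adj u v → w ≠ u → ¬G.Adj u w → |f u - f v| < |f u - f w|) :
    G.IsUmbrellaOrdering f := by
  intro u v w huv hvw huw
  constructor
  · by_contra h
    have := hf u w v huw (fun h' => huv.ne (congrArg f h').symm) h
    rw [abs_of_neg (by linarith), abs_of_neg (by linarith)] at this
    linarith
  · by_contra h
    have := hf w u v huw.symm (fun h' => hvw.ne (congrArg f h')) (fun h' => h h'.symm)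
    rw [abs_of_pos (by linarith), abs_of_pos (by linarith)] at this
    linarith

theorem isUmbrellaOrdering_of_proper_intervals [LinearOrder β] {a b : V → ℝ}
    (hab : ∀ u, a u ≤ b u)
    (hadj : ∀ u v, u ≠ v → (G.Adj u v ↔ (Set.Icc (a u) (b u) ∩ Set.Icc (a v) (b v)).Nonempty))
    (hproper : ∀ u v, u ≠ v → ¬(a u ≤ a v ∧ b v ≤ b u ∧ ¬(a u = a v ∧ b u = b v)))
    (τ : V → β) : G.IsUmbrellaOrdering fun u => toLex (a u, τ u) := by
  intro u v w huv hvw huw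
  have ne_of_key_lt {u v} (h : toLex (a u, τ u) < toLex (a v, τ v)) : u ≠ v := by
    rintro rfl; exact lt_irrefl _ h
  have hauv : a u ≤ a v := Prod.Lex.monotone_fst _ _ huv.le
  have havw : a v ≤ a w := Prod.Lex.monotone_fst _ _ hvw.le
  have hawu : a w ≤ b u := by
    obtain ⟨p, ⟨-, hpu⟩, hwp, -⟩ := (hadj u w (ne_of_key_lt (huv.trans hvw))).1 huw
    exact hwp.trans hpu
  -- otherwise the interval of `u` would properly contain that of `v`
  have hbuv : b u ≤ b v := by
    by_contra h
    exact hproper u v (ne_of_key_lt huv) ⟨hauv, (not_le.1 h).le, fun h' => h h'.2.le⟩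
  refine ⟨(hadj u v (ne_of_key_lt huv)).2 ⟨a v, ?_, ?_⟩,
    (hadj v w (ne_of_key_lt hvw)).2 ⟨a w, ?_, ?_⟩⟩
  all_goals
    simp only [Set.mem_Icc]
    constructor <;> linarith [hab v, hab w]

namespace IsUmbrellaOrdering

variable [LinearOrder α] {σ : V → α}

theorem exists_label_insert (hσ : Function.Injective σ) (hG : G.IsUmbrellaOrdering σ)
    {s : Finset V} {a : V} {x : V → ℝ}
    (hx : ∀ u ∈ s, ∀ v ∈ s, σ u < σ v → x u < x v ∧ (G.Adj u v ↔ x v < x u + 1))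
    (ha : ∀ u ∈ s, σ u < σ a) :
    ∃ t, ∀ u ∈ s, x u < t ∧ (G.Adj u a ↔ t < x u + 1) := by
  classical
  have lt_of_adj {u w} (hu : u ∈ s) (hw : w ∈ s) (hwa : G.Adj w a) : x u < x w + 1 := by
    rcases lt_trichotomy (σ u) (σ w) with h | h | h
    · linarith [(hx u hu w hw h).1]
    · rw [hσ h]; linarith
    · exact (hx w hw u hu h).2.1 (hG h (ha u hu) hwa).1
  have lt_of_not_adj {u w} (hu : u ∈ s) (hw : w ∈ s) (hua : ¬G.Adj u a) (hwa : G.Adj w a) :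
      x u < x w := by
    refine (hx u hu w hw ?_).1
    rcases lt_trichotomy (σ u) (σ w) with h | h | h
    · exact h
    · exact absurd (hσ h ▸ hwa) hua
    · exact absurd (hG h (ha u hu) hwa).2 hua
  -- `t` must exceed every `x u`, and `x u + 1` for the non-neighbours `u` of `a`, while staying
  -- below `x w + 1` for its neighbours `w`; the umbrella property makes these bounds compatible.
  obtain ⟨t, hlow, hup⟩ := Finset.exists_between'
    (s.image x ∪ (s.filter fun u => ¬G.Adj u a).image (x · + 1))
    ((s.filter fun w => G.Adj w a).image (x · + 1)) (by
      simp only [Finset.mem_union, Finset.mem_image, Finset.mem_filter]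
      rintro _ (⟨u, hu, rfl⟩ | ⟨u, ⟨hu, hua⟩, rfl⟩) _ ⟨w, ⟨hw, hwa⟩, rfl⟩
      · exact lt_of_adj hu hw hwa
      · linarith [lt_of_not_adj hu hw hua hwa])
  refine ⟨t, fun u hu => ⟨hlow _ (Finset.mem_union_left _ (Finset.mem_image_of_mem x hu)),
    fun hua => hup _ (Finset.mem_image_of_mem _ (Finset.mem_filter.2 ⟨hu, hua⟩)), fun h => ?_⟩⟩
  by_contra hua
  exact lt_asymm h
    (hlow _ (Finset.mem_union_right _ (Finset.mem_image_of_mem _ (Finset.mem_filter.2 ⟨hu, hua⟩))))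

theorem exists_labeling_on (hσ : Function.Injective σ) (hG : G.IsUmbrellaOrdering σ)
    (s : Finset V) :
    ∃ x : V → ℝ, ∀ u ∈ s, ∀ v ∈ s, σ u < σ v → x u < x v ∧ (G.Adj u v ↔ x v < x u + 1) := by
  classical
  induction s using Finset.induction_on_max_value σ with
  | empty => exact ⟨0, by simp⟩
  | insert a s has hmax ih =>
    obtain ⟨x, hx⟩ := ih
    have ha : ∀ u ∈ s, σ u < σ a := fun u hu =>
      (hmax u hu).lt_of_ne fun h => has (hσ h ▸ hu)
    obtain ⟨t, ht⟩ := hG.exists_label_insert hσ hx ha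
    refine ⟨Function.update x a t, ?_⟩
    have hne {u} (hu : u ∈ s) : u ≠ a := fun h => has (h ▸ hu)
    simp only [Finset.mem_insert]
    rintro u (rfl | hu) v (rfl | hv) huv
    · exact absurd huv (lt_irrefl _)
    · exact absurd (ha v hv) huv.not_gt
    · simpa [Function.update_of_ne (hne hu)] using ht u hu
    · simpa [Function.update_of_ne (hne hu), Function.update_of_ne (hne hv)] using hx u hu v hv huv

theorem exists_isUnitIntervalLabeling [Fintype V] (hσ : Function.Injective σ)
    (hG : G.IsUmbrellaOrdering σ) : ∃ x, G.IsUnitIntervalLabeling x := by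
  obtain ⟨x, hx⟩ := hG.exists_labeling_on hσ Finset.univ
  have adj_iff {u v} (h : σ u < σ v) : G.Adj u v ↔ |x u - x v| < 1 := by
    obtain ⟨hlt, hadj⟩ := hx u (Finset.mem_univ _) v (Finset.mem_univ _) h
    rw [hadj, abs_sub_lt_iff]
    constructor
    · intro h; constructor <;> linarith
    · intro h; linarith [h.2]
  refine ⟨x, fun u v h => ?_, fun u v huv => ?_⟩
  · by_contra huv
    rcases (hσ.ne huv).lt_or_gt with h' | h'
    · exact (hx u (Finset.mem_univ _) v (Finset.mem_univ _) h').1.ne h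
    · exact (hx v (Finset.mem_univ _) u (Finset.mem_univ _) h').1.ne h.symm
  · rcases (hσ.ne huv).lt_or_gt with h | h
    · exact adj_iff h
    · rw [G.adj_comm, abs_sub_comm]; exact adj_iff h

end IsUmbrellaOrdering

namespace IsUnitIntervalLabeling

theorem isOptimizedGraph {x : V → ℝ} (hx : G.IsUnitIntervalLabeling x) : IsOptimizedGraph G :=
  ⟨x, hx.1, fun _ _ _ huv hwu huw => ((hx.2 huv.ne).1 huv).trans_le
    (not_lt.1 fun h => huw ((hx.2 hwu.symm).2 h))⟩

theorem isProperIntervalGraph [Fintype V] {x : V → ℝ} (hx : G.IsUnitIntervalLabeling x) :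
    IsProperIntervalGraph G := by
  classical
  obtain ⟨c, hc, hc1⟩ := Finset.exists_between'
    (insert 0 ((Finset.univ.image fun p : V × V => |x p.1 - x p.2|).filter (· < 1))) {1}
    (by simp +contextual)
  simp only [Finset.mem_insert, Finset.mem_filter, Finset.mem_image, Finset.mem_univ, true_and,
    Prod.exists, Finset.mem_singleton, forall_eq] at hc hc1
  have hc0 : 0 < c := hc 0 (Or.inl rfl)
  refine ⟨x, (x · + c), fun u => by linarith, fun u v huv => ?_, fun u v huv h => ?_⟩
  · rw [hx.2 huv, Set.nonempty_Icc_inter_Icc_add_iff]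
    exact ⟨fun h => (hc _ (Or.inr ⟨⟨u, v, rfl⟩, h⟩)).le, fun h => h.trans_lt hc1⟩
  · exact huv (hx.1 (le_antisymm h.1 (by linarith [h.2.1])))

end IsUnitIntervalLabeling

end SimpleGraph

/-- A finite simple graph is an optimized graph iff it is a proper interval graph. -/
theorem optimizedGraph_iff_properInterval [Fintype V] (G : SimpleGraph V) :
    IsOptimizedGraph G ↔ IsProperIntervalGraph G := by
  constructor
  · rintro ⟨f, hf, hopt⟩
    obtain ⟨x, hx⟩ :=
      (SimpleGraph.isUmbrellaOrdering_of_neighbors_closer hopt).exists_isUnitIntervalLabeling hf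
    exact hx.isProperIntervalGraph
  · rintro ⟨a, b, hab, hadj, hproper⟩
    have hkey : Function.Injective fun u => toLex (a u, Fintype.equivFin V u) := fun u v h =>
      (Fintype.equivFin V).injective (Prod.ext_iff.1 (toLex.injective h)).2
    obtain ⟨x, hx⟩ := (SimpleGraph.isUmbrellaOrdering_of_proper_intervals hab hadj hproper
      (Fintype.equivFin V)).exists_isUnitIntervalLabeling hkey
    exact hx.isOptimizedGraph
end

section
/- The 4-cycle C_4 is a unit-max-tolerance graph (UMTG) but is not an interval graph. -/
variable {V : Type*}

/-- The cycle `C_n` on vertices `0, …, n-1`, with edges exactly between cyclically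
consecutive vertices. -/
def cycleG (n : ℕ) : SimpleGraph (Fin n) where
  Adj i j := i ≠ j ∧ (((i : ℕ) + 1) % n = (j : ℕ) ∨ ((j : ℕ) + 1) % n = (i : ℕ))
  symm := ⟨fun i j h => ⟨h.1.symm, h.2.symm⟩⟩
  loopless := ⟨fun i h => h.1 rfl⟩

/-- An interval graph: each vertex gets a closed real interval, and distinct vertices
are adjacent iff their intervals intersect. -/
def IsIntervalGraph (G : SimpleGraph V) : Prop :=
  ∃ a b : V → ℝ, (∀ u, a u ≤ b u) ∧
    ∀ u v : V, u ≠ v →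
      (G.Adj u v ↔ (Set.Icc (a u) (b u) ∩ Set.Icc (a v) (b v)).Nonempty)

/-! If four intervals meet cyclically and `I₀`, `I₂` are disjoint, with `I₀` to the left, then
`I₁` and `I₃` both meet `I₀` and `I₂`, so both contain the gap between them and meet each other:
interval graphs have no induced 4-cycle. Tolerances escape this because an overlap may be nonempty
and still too short: the diagonal overlaps are kept below the tolerances of their endpoints. -/

open Set

theorem Set.Icc_inter_Icc_nonempty_of_cyclic {α : Type*} [LinearOrder α]
    {a₀ b₀ a₁ b₁ a₂ b₂ a₃ b₃ : α}
    (h01 : (Icc a₀ b₀ ∩ Icc a₁ b₁).Nonempty) (h12 : (Icc a₁ b₁ ∩ Icc a₂ b₂).Nonempty)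
    (h23 : (Icc a₂ b₂ ∩ Icc a₃ b₃).Nonempty) (h30 : (Icc a₃ b₃ ∩ Icc a₀ b₀).Nonempty) :
    (Icc a₀ b₀ ∩ Icc a₂ b₂).Nonempty ∨ (Icc a₁ b₁ ∩ Icc a₃ b₃).Nonempty := by
  simp only [Icc_inter_Icc, nonempty_Icc, sup_le_iff, le_inf_iff] at *
  by_contra h
  simp only [not_or, not_and_or, not_le] at h
  obtain ⟨(h02 | h02) | h02 | h02, (h13 | h13) | h13 | h13⟩ := h <;> order

theorem IsIntervalGraph.adj_or_adj_of_cycle {G : SimpleGraph V} (hG : IsIntervalGraph G)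
    {v₀ v₁ v₂ v₃ : V} (h01 : G.Adj v₀ v₁) (h12 : G.Adj v₁ v₂) (h23 : G.Adj v₂ v₃)
    (h30 : G.Adj v₃ v₀) (h02 : v₀ ≠ v₂) (h13 : v₁ ≠ v₃) :
    G.Adj v₀ v₂ ∨ G.Adj v₁ v₃ := by
  obtain ⟨a, b, -, hG⟩ := hG
  rw [hG _ _ h02, hG _ _ h13]
  exact Icc_inter_Icc_nonempty_of_cyclic ((hG _ _ h01.ne).1 h01) ((hG _ _ h12.ne).1 h12)
    ((hG _ _ h23.ne).1 h23) ((hG _ _ h30.ne).1 h30)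

instance (n : ℕ) : DecidableRel (cycleG n).Adj := fun i j =>
  inferInstanceAs (Decidable (i ≠ j ∧ _))

theorem cycleG_four_not_isIntervalGraph : ¬ IsIntervalGraph (cycleG 4) := fun h =>
  absurd (h.adj_or_adj_of_cycle (v₀ := 0) (v₁ := 1) (v₂ := 2) (v₃ := 3)
    (by decide) (by decide) (by decide) (by decide) (by decide) (by decide)) (by decide)

theorem cycleG_four_isUMTG : IsUMTG (cycleG 4) := by
  let a : Fin 4 → ℝ := ![0, -3, -6, 3]
  -- Intervals of length 10; the overlaps along the cycle are 7, 7, 1, 7 and both diagonal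
  -- overlaps are 4, below the tolerance 5 of vertices 0 and 1.
  refine ⟨a, fun u => a u + 10, ![5, 5, 1, 1], ⟨fun u => by simp, ?_, ?_⟩, fun u v => by simp⟩
  · intro u
    fin_cases u <;> norm_num
  · intro u v huv
    fin_cases u <;> fin_cases v <;> simp only [ne_eq, not_true_eq_false] at huv <;>
      norm_num [cycleG, a]

/-- The 4-cycle is a unit-max-tolerance graph but not an interval graph. -/
theorem c4_umtg_not_interval :
    IsUMTG (cycleG 4) ∧ ¬ IsIntervalGraph (cycleG 4) :=
  ⟨cycleG_four_isUMTG, cycleG_four_not_isIntervalGraph⟩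
end
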